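/- In the two-player uniform-reward ISG below, best responses can cycle: starting from schedule π^D, the sequence of unilateral best-response deviations π^D → π^A (player 2 deviates) → π^B (player 1 deviates) → π^C (player 2 deviates) → π^D (player 1 deviates) is a cycle where each deviation is a best response of the deviating player, and the stated utilities hold: at π^A player 1 gets 8 and player 2 gets 10; at π^B player 1 gets 10 and player 2 gets 8; at π^C player 1 gets 9 and player 2 gets 10; at π^D player 1 gets 10 and player 2 gets 9. -/
import Mathlib

open scoped Classical
noncomputable section

/-- The (1-based) time slot at which service `v` is deployed. -/
def slot {k q : ℕ} (σ : Fin k → Equiv.Perm (Fin q)) (v : Fin k × Fin q) : ℕ :=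
  (σ v.1 v.2 : ℕ) + 1

/-- Activation time of `v`: latest deployment among `v` and its in-neighbors. -/
def act {k q : ℕ} (E : Fin k × Fin q → Fin k × Fin q → Prop)
    (σ : Fin k → Equiv.Perm (Fin q)) (v : Fin k × Fin q) : ℕ :=
  (insert v (Finset.univ.filter fun w => E w v)).sup (slot σ)

/-- Player `i`'s utility under uniform rewards. -/
def util {k q : ℕ} (E : Fin k × Fin q → Fin k × Fin q → Prop)
    (σ : Fin k → Equiv.Perm (Fin q)) (i : Fin k) : ℕ :=
  ∑ j : Fin q, (q + 1 - act E σ (i, j))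

/-- Utilitarian social welfare. -/
def welfare {k q : ℕ} (E : Fin k × Fin q → Fin k × Fin q → Prop)
    (σ : Fin k → Equiv.Perm (Fin q)) : ℕ :=
  ∑ i : Fin k, util E σ i

/-- Pure Nash equilibrium: no unilateral deviation improves a player's utility. -/
def PNE {k q : ℕ} (E : Fin k × Fin q → Fin k × Fin q → Prop)
    (σ : Fin k → Equiv.Perm (Fin q)) : Prop :=
  ∀ (i : Fin k) (τ : Equiv.Perm (Fin q)),
    util E (Function.update σ i τ) i ≤ util E σ i

/-- Base dependency edges: (a₁,a₂), (b₁,b₂), (c₂,c₁), (d₂,d₁),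
with services a,b,c,d of player `i` at indices 0,1,2,3. -/
def base15 : Fin 2 × Fin 4 → Fin 2 × Fin 4 → Prop := fun v w =>
  (v, w) ∈ ([((0, 0), (1, 0)), ((0, 1), (1, 1)), ((1, 2), (0, 2)), ((1, 3), (0, 3))] :
      List ((Fin 2 × Fin 4) × (Fin 2 × Fin 4)))

/-- The dependency relation: transitive closure of the base edges. -/
def E15 : Fin 2 × Fin 4 → Fin 2 × Fin 4 → Prop := Relation.TransGen base15

def mkPerm (f : Fin 4 → Fin 4) (h : Function.Bijective f := by decide) :
    Equiv.Perm (Fin 4) := Equiv.ofBijective f h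

/-- Player 1's ordering (c, a, d, b). -/
def p1A : Equiv.Perm (Fin 4) := mkPerm ![1, 3, 0, 2]
/-- Player 2's ordering (d, a, c, b). -/
def p2A : Equiv.Perm (Fin 4) := mkPerm ![1, 3, 2, 0]
/-- Player 1's ordering (d, b, c, a). -/
def p1B : Equiv.Perm (Fin 4) := mkPerm ![3, 1, 2, 0]
/-- Player 2's ordering (c, d, b, a). -/
def p2C : Equiv.Perm (Fin 4) := mkPerm ![3, 2, 0, 1]

def σA : Fin 2 → Equiv.Perm (Fin 4) := ![p1A, p2A]
def σB : Fin 2 → Equiv.Perm (Fin 4) := ![p1B, p2A]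
def σC : Fin 2 → Equiv.Perm (Fin 4) := ![p1B, p2C]
def σD : Fin 2 → Equiv.Perm (Fin 4) := ![p1A, p2C]

def edges15 : List ((Fin 2 × Fin 4) × (Fin 2 × Fin 4)) :=
  [((0, 0), (1, 0)), ((0, 1), (1, 1)), ((1, 2), (0, 2)), ((1, 3), (0, 3))]

def eB (v w : Fin 2 × Fin 4) : Bool := decide ((v, w) ∈ edges15)

lemma base15_iff (v w : Fin 2 × Fin 4) : base15 v w ↔ eB v w = true := by
  rw [eB, decide_eq_true_iff]; exact Iff.rfl

lemma E15_iff (v w : Fin 2 × Fin 4) : E15 v w ↔ eB v w = true := by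
  constructor
  · intro h
    induction h with
    | single h => exact (base15_iff _ _).mp h
    | tail _ h2 ih =>
      exfalso
      have hcomp : ∀ a b c : Fin 2 × Fin 4, eB a b = true → eB b c = true → False := by decide
      exact hcomp _ _ _ ih ((base15_iff _ _).mp h2)
  · intro h; exact Relation.TransGen.single ((base15_iff _ _).mpr h)

def actB (σ : Fin 2 → (Fin 4 → Fin 4)) (v : Fin 2 × Fin 4) : ℕ :=
  (insert v (Finset.univ.filter fun w => eB w v = true)).sup (fun w => (σ w.1 w.2 : ℕ) + 1)

lemma act_eq (σ : Fin 2 → Equiv.Perm (Fin 4)) (v : Fin 2 × Fin 4) :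
    act E15 σ v = actB (fun k => ⇑(σ k)) v := by
  have hset : (Finset.univ.filter fun w => E15 w v)
      = (Finset.univ.filter fun w => eB w v = true) :=
    Finset.filter_congr (fun w _ => E15_iff w v)
  rw [act, actB, hset]
  rfl

def utilB (σ : Fin 2 → (Fin 4 → Fin 4)) (i : Fin 2) : ℕ :=
  ∑ j : Fin 4, (5 - actB σ (i, j))

lemma util_eq (σ : Fin 2 → Equiv.Perm (Fin 4)) (i : Fin 2) :
    util E15 σ i = utilB (fun k => ⇑(σ k)) i := by
  rw [util, utilB]
  exact Finset.sum_congr rfl fun j _ => by rw [act_eq]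

lemma coe_update (σ : Fin 2 → Equiv.Perm (Fin 4)) (i : Fin 2) (τ : Equiv.Perm (Fin 4)) :
    (fun k => ⇑(Function.update σ i τ k)) = Function.update (fun k => ⇑(σ k)) i ⇑τ := by
  funext k
  exact Function.apply_update (fun _ (p : Equiv.Perm (Fin 4)) => ⇑p) σ i τ k

def σAf : Fin 2 → Fin 4 → Fin 4 := ![![1, 3, 0, 2], ![1, 3, 2, 0]]
def σBf : Fin 2 → Fin 4 → Fin 4 := ![![3, 1, 2, 0], ![1, 3, 2, 0]]
def σCf : Fin 2 → Fin 4 → Fin 4 := ![![3, 1, 2, 0], ![3, 2, 0, 1]]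
def σDf : Fin 2 → Fin 4 → Fin 4 := ![![1, 3, 0, 2], ![3, 2, 0, 1]]

lemma coeA : (fun k => ⇑(σA k)) = σAf := by funext k; fin_cases k <;> rfl
lemma coeB : (fun k => ⇑(σB k)) = σBf := by funext k; fin_cases k <;> rfl
lemma coeC : (fun k => ⇑(σC k)) = σCf := by funext k; fin_cases k <;> rfl
lemma coeD : (fun k => ⇑(σD k)) = σDf := by funext k; fin_cases k <;> rfl

set_option maxRecDepth 10000 in
lemma brA : ∀ f : Fin 4 → Fin 4, Function.Bijective f →
    utilB (Function.update σAf 1 f) 1 ≤ 10 := by decide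
set_option maxRecDepth 10000 in
lemma brB : ∀ f : Fin 4 → Fin 4, Function.Bijective f →
    utilB (Function.update σBf 0 f) 0 ≤ 10 := by decide
set_option maxRecDepth 10000 in
lemma brC : ∀ f : Fin 4 → Fin 4, Function.Bijective f →
    utilB (Function.update σCf 1 f) 1 ≤ 10 := by decide
set_option maxRecDepth 10000 in
lemma brD : ∀ f : Fin 4 → Fin 4, Function.Bijective f →
    utilB (Function.update σDf 0 f) 0 ≤ 10 := by decide

lemma vals : utilB σAf 0 = 8 ∧ utilB σAf 1 = 10 ∧ utilB σBf 0 = 10 ∧ utilB σBf 1 = 8 ∧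
    utilB σCf 0 = 9 ∧ utilB σCf 1 = 10 ∧ utilB σDf 0 = 10 ∧ utilB σDf 1 = 9 := by decide

/-- A best-response cycle π^D → π^A → π^B → π^C → π^D, with the stated utilities. -/
theorem stmt_15 :
    -- the four profiles differ only in the deviating player's schedule
    σA = Function.update σD 1 p2A ∧
    σB = Function.update σA 0 p1B ∧
    σC = Function.update σB 1 p2C ∧
    σD = Function.update σC 0 p1A ∧
    -- each deviation is a best response of the deviating player
    (∀ τ : Equiv.Perm (Fin 4), util E15 (Function.update σA 1 τ) 1 ≤ util E15 σA 1) ∧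
    (∀ τ : Equiv.Perm (Fin 4), util E15 (Function.update σB 0 τ) 0 ≤ util E15 σB 0) ∧
    (∀ τ : Equiv.Perm (Fin 4), util E15 (Function.update σC 1 τ) 1 ≤ util E15 σC 1) ∧
    (∀ τ : Equiv.Perm (Fin 4), util E15 (Function.update σD 0 τ) 0 ≤ util E15 σD 0) ∧
    -- the stated utilities
    util E15 σA 0 = 8 ∧ util E15 σA 1 = 10 ∧
    util E15 σB 0 = 10 ∧ util E15 σB 1 = 8 ∧
    util E15 σC 0 = 9 ∧ util E15 σC 1 = 10 ∧
    util E15 σD 0 = 10 ∧ util E15 σD 1 = 9 := by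
  obtain ⟨vA0, vA1, vB0, vB1, vC0, vC1, vD0, vD1⟩ := vals
  refine ⟨by funext k; fin_cases k <;> rfl, by funext k; fin_cases k <;> rfl,
    by funext k; fin_cases k <;> rfl, by funext k; fin_cases k <;> rfl,
    ?_, ?_, ?_, ?_, ?_, ?_, ?_, ?_, ?_, ?_, ?_, ?_⟩
  · intro τ
    rw [util_eq, util_eq, coe_update, coeA, vA1]
    exact brA ⇑τ τ.bijective
  · intro τ
    rw [util_eq, util_eq, coe_update, coeB, vB0]
    exact brB ⇑τ τ.bijective
  · intro τ
    rw [util_eq, util_eq, coe_update, coeC, vC1]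
    exact brC ⇑τ τ.bijective
  · intro τ
    rw [util_eq, util_eq, coe_update, coeD, vD0]
    exact brD ⇑τ τ.bijective
  · rw [util_eq, coeA]; exact vA0
  · rw [util_eq, coeA]; exact vA1
  · rw [util_eq, coeB]; exact vB0
  · rw [util_eq, coeB]; exact vB1
  · rw [util_eq, coeC]; exact vC0
  · rw [util_eq, coeC]; exact vC1
  · rw [util_eq, coeD]; exact vD0
  · rw [util_eq, coeD]; exact vD1
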